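/- arXiv:quant-ph/0608146 — 2 statements merged into one kernel-verified Lean document; each statement's English description precedes it below -/
import Mathlib

section
/- Let B_1 and B_2 be real symmetric matrices and D_1, D_2 diagonal matrices such that D_1 - B_1, D_1 + B_1, D_2 - B_2, and D_2 + B_2 are all positive semidefinite. Then (D_1 ⊗ D_2) - (B_1 ⊗ B_2) is positive semidefinite. -/
open Kronecker Matrix
open scoped ComplexOrder

theorem Matrix.kronecker_sub_add_add_kronecker_add_sub {R l n : Type*} [CommRing R]
    (A₁ B₁ : Matrix l l R) (A₂ B₂ : Matrix n n R) :
    (A₁ - B₁) ⊗ₖ (A₂ + B₂) + (A₁ + B₁) ⊗ₖ (A₂ - B₂) = (2 : R) • (A₁ ⊗ₖ A₂ - B₁ ⊗ₖ B₂) := by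
  ext i j
  simp only [add_apply, sub_apply, smul_apply, kroneckerMap_apply, smul_eq_mul]
  ring

theorem Matrix.PosSemidef.kronecker_sub_kronecker {𝕜 l n : Type*} [RCLike 𝕜] [Finite l] [Finite n]
    {A₁ B₁ : Matrix l l 𝕜} {A₂ B₂ : Matrix n n 𝕜}
    (h₁m : (A₁ - B₁).PosSemidef) (h₁p : (A₁ + B₁).PosSemidef)
    (h₂m : (A₂ - B₂).PosSemidef) (h₂p : (A₂ + B₂).PosSemidef) :
    (A₁ ⊗ₖ A₂ - B₁ ⊗ₖ B₂).PosSemidef := by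
  have h : ((2 : 𝕜) • (A₁ ⊗ₖ A₂ - B₁ ⊗ₖ B₂)).PosSemidef := by
    rw [← kronecker_sub_add_add_kronecker_add_sub]
    exact (h₁m.kronecker h₂p).add (h₁p.kronecker h₂m)
  simpa using h.smul (inv_nonneg.mpr zero_le_two : (0 : 𝕜) ≤ 2⁻¹)

theorem kron_psd_of_plus_minus_general {m k : ℕ}
    (B₁ D₁ : Matrix (Fin m) (Fin m) ℝ) (B₂ D₂ : Matrix (Fin k) (Fin k) ℝ)
    (h₁m : (D₁ - B₁).PosSemidef) (h₁p : (D₁ + B₁).PosSemidef)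
    (h₂m : (D₂ - B₂).PosSemidef) (h₂p : (D₂ + B₂).PosSemidef) :
    (D₁ ⊗ₖ D₂ - B₁ ⊗ₖ B₂).PosSemidef :=
  h₁m.kronecker_sub_kronecker h₁p h₂m h₂p

theorem kron_psd_of_plus_minus {m k : ℕ}
    (B₁ D₁ : Matrix (Fin m) (Fin m) ℝ) (B₂ D₂ : Matrix (Fin k) (Fin k) ℝ)
    (hB₁ : B₁.IsSymm) (hB₂ : B₂.IsSymm) (hD₁ : D₁.IsDiag) (hD₂ : D₂.IsDiag)
    (h₁m : (D₁ - B₁).PosSemidef) (h₁p : (D₁ + B₁).PosSemidef)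
    (h₂m : (D₂ - B₂).PosSemidef) (h₂p : (D₂ + B₂).PosSemidef) :
    (D₁ ⊗ₖ D₂ - B₁ ⊗ₖ B₂).PosSemidef :=
  kron_psd_of_plus_minus_general B₁ D₁ B₂ D₂ h₁m h₁p h₂m h₂p
end

section
/- Define the quantum bias of an XOR game with cost matrix A (an S×T real matrix) as ε(A) = sup over unit vectors {x_s}_{s∈S}, {y_t}_{t∈T} in some real inner product space of ∑_{s,t} A_{s,t} (x_s · y_t). Then ε(A) is multiplicative under Kronecker product: ε(A_1 ⊗ A_2) = ε(A_1) · ε(A_2) for any real matrices A_1, A_2. -/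
open Kronecker RealInnerProductSpace

/-- The quantum bias of an XOR game with cost matrix `A`, in Tsirelson's
vector formulation: the supremum over finite families of real unit vectors. -/
noncomputable def quantumBias {S T : Type*} [Fintype S] [Fintype T]
    (A : Matrix S T ℝ) : ℝ :=
  sSup { r : ℝ | ∃ (d : ℕ) (x : S → EuclideanSpace ℝ (Fin d))
      (y : T → EuclideanSpace ℝ (Fin d)),
      (∀ s, ‖x s‖ = 1) ∧ (∀ t, ‖y t‖ = 1) ∧
      r = ∑ s : S, ∑ t : T, A s t * ⟪x s, y t⟫ }

/-!
Write `ε = quantumBias`. Then `ε(A)` is the value of the semidefinite program maximising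
`∑ A s t * G (inl s) (inr t)` over the elliptope of correlation matrices `G` (the Gram matrices of
unit vectors). The elliptope is compact, so the maximum is attained.

Lower bound: restrict the Kronecker product of optimal correlation matrices for `A₁` and `A₂` to
the indices `(S₁ × S₂) ⊕ (T₁ × T₂)`. The result is a correlation matrix of value `ε(A₁) ε(A₂)`.

Upper bound, by SDP duality: if `[[diag u, -A], [-Aᵀ, diag v]]` is positive semidefinite, then
`2 ε(A) ≤ ∑ u + ∑ v`, since the trace of a product of two such matrices is nonnegative. Take an
optimum `G = gram w` and move along the curves `τ ↦ (√τ z, √(1 - τ z²) w)` of unit vectors. To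
first order this shows that `u s = ∑ t, A s t G s t` and `v t = ∑ s, A s t G s t` form such a
certificate, with `∑ u = ∑ v = ε(A)`. Kronecker products of certificates, with the sign of `A₂`
flipped, are again certificates.
-/

open Matrix Filter Topology

lemma Matrix.PosSemidef.exists_gram_eq {ι : Type*} [Fintype ι] {G : Matrix ι ι ℝ}
    (hG : G.PosSemidef) : ∃ v : ι → EuclideanSpace ℝ ι, gram ℝ v = G := by
  classical
  obtain ⟨B, rfl⟩ := by
    open scoped MatrixOrder in exact CStarAlgebra.nonneg_iff_eq_star_mul_self.mp hG.nonneg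
  refine ⟨fun j => WithLp.toLp 2 fun k => B k j, ?_⟩
  ext i j
  simp [mul_apply, PiLp.inner_apply, star_eq_conjTranspose, mul_comm]

lemma Matrix.PosSemidef.trace_mul_nonneg {ι : Type*} [Fintype ι] {M G : Matrix ι ι ℝ}
    (hM : M.PosSemidef) (hG : G.PosSemidef) : 0 ≤ (M * G).trace := by
  classical
  obtain ⟨B, rfl⟩ := by
    open scoped MatrixOrder in exact CStarAlgebra.nonneg_iff_eq_star_mul_self.mp hG.nonneg
  rw [← Matrix.mul_assoc, trace_mul_comm, ← Matrix.mul_assoc]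
  exact (hM.mul_mul_conjTranspose_same B).trace_nonneg

lemma HasDerivAt.nonpos_of_eventually_le {f : ℝ → ℝ} {f' x : ℝ} (hf : HasDerivAt f f' x)
    (h : ∀ᶠ y in 𝓝[>] x, f y ≤ f x) : f' ≤ 0 := by
  have hslope := (hasDerivWithinAt_iff_tendsto_slope' (s := Set.Ioi x) (lt_irrefl x)).mp
    hf.hasDerivWithinAt
  refine le_of_tendsto hslope ?_
  filter_upwards [h, self_mem_nhdsWithin] with y hy hxy
  rw [slope_def_field]
  exact div_nonpos_of_nonpos_of_nonneg (sub_nonpos.mpr hy) (sub_nonneg.mpr (le_of_lt hxy))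

lemma hasDerivAt_sqrt_one_sub_mul (c : ℝ) : HasDerivAt (fun τ => √(1 - τ * c)) (-c / 2) 0 := by
  simpa using (((hasDerivAt_id (0 : ℝ)).mul_const c).const_sub 1).sqrt (by simp)

namespace XORGame

def elliptope (ι : Type*) : Set (Matrix ι ι ℝ) :=
  {G | G.PosSemidef ∧ ∀ i, G i i = 1}

section Elliptope

variable {ι κ : Type*}

lemma one_mem_elliptope [DecidableEq ι] : (1 : Matrix ι ι ℝ) ∈ elliptope ι :=
  ⟨PosSemidef.one, fun i => one_apply_eq i⟩

lemma submatrix_mem_elliptope {G : Matrix ι ι ℝ} (hG : G ∈ elliptope ι) (e : κ → ι) :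
    G.submatrix e e ∈ elliptope κ :=
  ⟨hG.1.submatrix e, fun k => hG.2 (e k)⟩

variable [Fintype ι]

lemma gram_mem_elliptope {E : Type*} [NormedAddCommGroup E] [InnerProductSpace ℝ E]
    {v : ι → E} (hv : ∀ i, ‖v i‖ = 1) : gram ℝ v ∈ elliptope ι :=
  ⟨posSemidef_gram ℝ v, fun i => by simp [hv]⟩

lemma elliptope_eq_image_gram :
    elliptope ι = gram ℝ '' Set.univ.pi fun _ : ι => Metric.sphere (0 : EuclideanSpace ℝ ι) 1 := by
  ext G
  constructor
  · rintro ⟨hG, hdiag⟩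
    obtain ⟨v, rfl⟩ := hG.exists_gram_eq
    refine ⟨v, fun i _ => ?_, rfl⟩
    have hnorm := hdiag i
    rw [gram_apply, real_inner_self_eq_norm_sq,
      pow_eq_one_iff_of_nonneg (norm_nonneg _) two_ne_zero] at hnorm
    exact mem_sphere_zero_iff_norm.mpr hnorm
  · rintro ⟨v, hv, rfl⟩
    exact gram_mem_elliptope fun i => by simpa using hv i trivial

lemma isCompact_elliptope : IsCompact (elliptope ι) := by
  rw [elliptope_eq_image_gram]
  refine (isCompact_univ_pi fun _ => isCompact_sphere _ _).image ?_
  exact continuous_pi fun i => continuous_pi fun j => by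
    simp only [gram_apply]
    fun_prop

lemma kronecker_mem_elliptope [Fintype κ] {G : Matrix ι ι ℝ} {H : Matrix κ κ ℝ}
    (hG : G ∈ elliptope ι) (hH : H ∈ elliptope κ) : G ⊗ₖ H ∈ elliptope (ι × κ) :=
  ⟨hG.1.kronecker hH.1, fun p => by simp [hG.2, hH.2]⟩

/-- When `G = gram w`, this is the Gram matrix of the vectors `(√τ * z i, √(1 - τ * z i ^ 2) • w i)`
in `ℝ × E`. -/
noncomputable def perturb [DecidableEq ι] (G : Matrix ι ι ℝ) (z : ι → ℝ) (τ : ℝ) : Matrix ι ι ℝ :=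
  τ • vecMulVec z z +
    diagonal (fun i => √(1 - τ * z i ^ 2)) * G * diagonal (fun i => √(1 - τ * z i ^ 2))

variable [DecidableEq ι]

lemma perturb_apply (G : Matrix ι ι ℝ) (z : ι → ℝ) (τ : ℝ) (i j : ι) :
    perturb G z τ i j =
      τ * (z i * z j) + √(1 - τ * z i ^ 2) * √(1 - τ * z j ^ 2) * G i j := by
  simp only [perturb, Matrix.add_apply, Matrix.smul_apply, vecMulVec_apply, smul_eq_mul,
    mul_diagonal, diagonal_mul]
  ring

lemma perturb_zero (G : Matrix ι ι ℝ) (z : ι → ℝ) : perturb G z 0 = G := by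
  ext i j
  simp [perturb_apply]

lemma perturb_mem_elliptope {G : Matrix ι ι ℝ} (hG : G ∈ elliptope ι) (z : ι → ℝ) {τ : ℝ}
    (hτ : 0 ≤ τ) (hz : ∀ i, τ * z i ^ 2 ≤ 1) : perturb G z τ ∈ elliptope ι := by
  refine ⟨((posSemidef_vecMulVec_self_star z).smul hτ).add ?_, fun i => ?_⟩
  · simpa using hG.1.conjTranspose_mul_mul_same (diagonal fun i => √(1 - τ * z i ^ 2))
  · rw [perturb_apply, hG.2, mul_one, Real.mul_self_sqrt (by linarith [hz i])]
    ring

lemma eventually_perturb_mem_elliptope {G : Matrix ι ι ℝ} (hG : G ∈ elliptope ι)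
    (z : ι → ℝ) : ∀ᶠ τ in 𝓝[>] 0, perturb G z τ ∈ elliptope ι := by
  have hsmall : ∀ i, ∀ᶠ τ in 𝓝[>] (0 : ℝ), τ * z i ^ 2 ≤ 1 := fun i => by
    have : Tendsto (fun τ : ℝ => τ * z i ^ 2) (𝓝 0) (𝓝 0) := by
      simpa using (continuous_mul_const (z i ^ 2)).tendsto 0
    exact (this.mono_left nhdsWithin_le_nhds).eventually (eventually_le_nhds zero_lt_one)
  filter_upwards [eventually_all.mpr hsmall, self_mem_nhdsWithin] with τ hz hτ
  exact perturb_mem_elliptope hG z (le_of_lt hτ) hz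

end Elliptope

section Value

variable {S T : Type*} [Fintype S] [Fintype T]

def sdpValue (A : Matrix S T ℝ) (G : Matrix (S ⊕ T) (S ⊕ T) ℝ) : ℝ :=
  ∑ s, ∑ t, A s t * G (.inl s) (.inr t)

lemma continuous_sdpValue (A : Matrix S T ℝ) : Continuous (sdpValue A) := by
  unfold sdpValue
  fun_prop

lemma quantumBias_eq_sSup_image_sdpValue (A : Matrix S T ℝ) :
    quantumBias A = sSup (sdpValue A '' elliptope (S ⊕ T)) := by
  unfold quantumBias
  congr 1
  ext r
  constructor
  · rintro ⟨d, x, y, hx, hy, rfl⟩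
    exact ⟨gram ℝ (Sum.elim x y), gram_mem_elliptope (Sum.forall.mpr ⟨hx, hy⟩), rfl⟩
  · rintro ⟨G, hG, rfl⟩
    rw [elliptope_eq_image_gram] at hG
    obtain ⟨v, hv, rfl⟩ := hG
    let e := LinearIsometryEquiv.piLpCongrLeft 2 ℝ ℝ (Fintype.equivFin (S ⊕ T))
    refine ⟨_, fun s => e (v (.inl s)), fun t => e (v (.inr t)), fun s => ?_, fun t => ?_, ?_⟩
    · simpa using hv (.inl s) trivial
    · simpa using hv (.inr t) trivial
    · simp [sdpValue, LinearIsometryEquiv.inner_map_map]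

lemma exists_isMaxOn_sdpValue (A : Matrix S T ℝ) :
    ∃ G ∈ elliptope (S ⊕ T), IsMaxOn (sdpValue A) (elliptope (S ⊕ T)) G ∧
      quantumBias A = sdpValue A G := by
  classical
  obtain ⟨G, hG, hmax⟩ := isCompact_elliptope.exists_isMaxOn ⟨1, one_mem_elliptope⟩
    (continuous_sdpValue A).continuousOn
  refine ⟨G, hG, hmax, ?_⟩
  rw [quantumBias_eq_sSup_image_sdpValue]
  exact IsGreatest.csSup_eq ⟨Set.mem_image_of_mem _ hG, Set.forall_mem_image.mpr hmax⟩

lemma sdpValue_le_quantumBias (A : Matrix S T ℝ) {G : Matrix (S ⊕ T) (S ⊕ T) ℝ}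
    (hG : G ∈ elliptope (S ⊕ T)) : sdpValue A G ≤ quantumBias A := by
  obtain ⟨_, -, hmax, hbias⟩ := exists_isMaxOn_sdpValue A
  exact hbias ▸ hmax hG

variable [DecidableEq S] [DecidableEq T]

lemma hasDerivAt_sdpValue_perturb (A : Matrix S T ℝ) (G : Matrix (S ⊕ T) (S ⊕ T) ℝ)
    (a : S → ℝ) (b : T → ℝ) :
    HasDerivAt (fun τ => sdpValue A (perturb G (Sum.elim a b) τ))
      (∑ s, ∑ t, A s t * (a s * b t - (a s ^ 2 + b t ^ 2) / 2 * G (.inl s) (.inr t))) 0 := by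
  simp only [sdpValue, perturb_apply, Sum.elim_inl, Sum.elim_inr]
  refine HasDerivAt.fun_sum fun s _ => HasDerivAt.fun_sum fun t _ => ?_
  refine ((((hasDerivAt_id 0).mul_const (a s * b t)).add
    (((hasDerivAt_sqrt_one_sub_mul (a s ^ 2)).mul (hasDerivAt_sqrt_one_sub_mul (b t ^ 2))).mul_const
      (G (.inl s) (.inr t)))).const_mul (A s t)).congr_deriv ?_
  simp only [zero_mul, sub_zero, Real.sqrt_one]
  ring

end Value

section Duality

variable {S T : Type*} [DecidableEq S] [DecidableEq T]

/-- Positive semidefiniteness of this matrix is feasibility of `(u, v)` for the dual program,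
whose objective is `(∑ u + ∑ v) / 2`. -/
def dualMatrix (A : Matrix S T ℝ) (u : S → ℝ) (v : T → ℝ) : Matrix (S ⊕ T) (S ⊕ T) ℝ :=
  fromBlocks (diagonal u) (-A) (-Aᵀ) (diagonal v)

lemma isHermitian_dualMatrix (A : Matrix S T ℝ) (u : S → ℝ) (v : T → ℝ) :
    (dualMatrix A u v).IsHermitian := by
  simp [dualMatrix, IsHermitian, fromBlocks_transpose]

variable [Fintype S] [Fintype T]

lemma trace_dualMatrix_mul {A : Matrix S T ℝ} {u : S → ℝ} {v : T → ℝ}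
    {G : Matrix (S ⊕ T) (S ⊕ T) ℝ} (hG : G ∈ elliptope (S ⊕ T)) :
    (dualMatrix A u v * G).trace = ∑ s, u s + ∑ t, v t - 2 * sdpValue A G := by
  have hsymm : ∀ s t, G (.inr t) (.inl s) = G (.inl s) (.inr t) := fun s t =>
    hG.1.isHermitian.apply (.inl s) (.inr t)
  simp only [trace, dualMatrix, diag_apply, mul_apply, Fintype.sum_sum_type,
    Finset.sum_add_distrib, fromBlocks_apply₁₁, fromBlocks_apply₁₂, fromBlocks_apply₂₁,
    fromBlocks_apply₂₂, diagonal_apply, ite_mul, zero_mul, Finset.sum_ite_eq, Finset.mem_univ,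
    if_true, hG.2, mul_one, Matrix.neg_apply, transpose_apply, neg_mul, Finset.sum_neg_distrib,
    hsymm, sdpValue]
  rw [Finset.sum_comm (γ := T)]
  ring

lemma two_mul_quantumBias_le {A : Matrix S T ℝ} {u : S → ℝ} {v : T → ℝ}
    (hM : (dualMatrix A u v).PosSemidef) : 2 * quantumBias A ≤ ∑ s, u s + ∑ t, v t := by
  obtain ⟨G, hG, -, hbias⟩ := exists_isMaxOn_sdpValue A
  have htrace := hM.trace_mul_nonneg hG.1
  rw [trace_dualMatrix_mul hG] at htrace
  linarith

lemma dotProduct_dualMatrix_mulVec (A : Matrix S T ℝ) (u : S → ℝ) (v : T → ℝ) (a : S → ℝ)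
    (b : T → ℝ) : Sum.elim a b ⬝ᵥ dualMatrix A u v *ᵥ Sum.elim a b =
      ∑ s, u s * a s ^ 2 + ∑ t, v t * b t ^ 2 - 2 * ∑ s, ∑ t, A s t * (a s * b t) := by
  have hcross : b ⬝ᵥ Aᵀ *ᵥ a = a ⬝ᵥ A *ᵥ b := by
    rw [mulVec_transpose, dotProduct_comm, dotProduct_mulVec]
  simp only [dualMatrix, fromBlocks_mulVec, Sum.elim_comp_inl, Sum.elim_comp_inr,
    sumElim_dotProduct_sumElim, dotProduct_add, neg_mulVec, dotProduct_neg, hcross]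
  simp only [dotProduct, mulVec, diagonal_apply, ite_mul, zero_mul, Finset.sum_ite_eq,
    Finset.mem_univ, if_true]
  have hu : ∑ s, a s * (u s * a s) = ∑ s, u s * a s ^ 2 := Finset.sum_congr rfl fun _ _ => by ring
  have hv : ∑ t, b t * (v t * b t) = ∑ t, v t * b t ^ 2 := Finset.sum_congr rfl fun _ _ => by ring
  have hA : ∑ s, a s * ∑ t, A s t * b t = ∑ s, ∑ t, A s t * (a s * b t) :=
    Finset.sum_congr rfl fun _ _ => by
      rw [Finset.mul_sum]
      exact Finset.sum_congr rfl fun _ _ => by ring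
  linear_combination hu + hv - 2 * hA

lemma posSemidef_dualMatrix_iff {A : Matrix S T ℝ} {u : S → ℝ} {v : T → ℝ} :
    (dualMatrix A u v).PosSemidef ↔ ∀ (a : S → ℝ) (b : T → ℝ),
      2 * ∑ s, ∑ t, A s t * (a s * b t) ≤ ∑ s, u s * a s ^ 2 + ∑ t, v t * b t ^ 2 := by
  rw [posSemidef_iff_dotProduct_mulVec, and_iff_right (isHermitian_dualMatrix A u v)]
  refine ⟨fun h a b => ?_, fun h x => ?_⟩
  · have := h (Sum.elim a b)
    rw [star_trivial, dotProduct_dualMatrix_mulVec] at this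
    linarith
  · rw [star_trivial, ← Sum.elim_comp_inl_inr x, dotProduct_dualMatrix_mulVec]
    linarith [h (x ∘ .inl) (x ∘ .inr)]

lemma posSemidef_dualMatrix_neg {A : Matrix S T ℝ} {u : S → ℝ} {v : T → ℝ}
    (h : (dualMatrix A u v).PosSemidef) : (dualMatrix (-A) u v).PosSemidef := by
  rw [posSemidef_dualMatrix_iff] at h ⊢
  intro a b
  simpa using h a (-b)

lemma posSemidef_dualMatrix_of_isMaxOn {A : Matrix S T ℝ} {G : Matrix (S ⊕ T) (S ⊕ T) ℝ}
    (hG : G ∈ elliptope (S ⊕ T)) (hmax : IsMaxOn (sdpValue A) (elliptope (S ⊕ T)) G) :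
    (dualMatrix A (fun s => ∑ t, A s t * G (.inl s) (.inr t))
      (fun t => ∑ s, A s t * G (.inl s) (.inr t))).PosSemidef := by
  rw [posSemidef_dualMatrix_iff]
  intro a b
  have hderiv := (hasDerivAt_sdpValue_perturb A G a b).nonpos_of_eventually_le
    ((eventually_perturb_mem_elliptope hG _).mono fun τ hτ => by
      rw [perturb_zero]
      exact hmax hτ)
  have hu : ∑ s, (∑ t, A s t * G (.inl s) (.inr t)) * a s ^ 2 =
      ∑ s, ∑ t, A s t * G (.inl s) (.inr t) * a s ^ 2 := by
    simp only [Finset.sum_mul]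
  have hv : ∑ t, (∑ s, A s t * G (.inl s) (.inr t)) * b t ^ 2 =
      ∑ s, ∑ t, A s t * G (.inl s) (.inr t) * b t ^ 2 := by
    simp only [Finset.sum_mul]
    exact Finset.sum_comm
  have hsplit : ∑ s, ∑ t, A s t * (a s * b t - (a s ^ 2 + b t ^ 2) / 2 * G (.inl s) (.inr t)) =
      ∑ s, ∑ t, A s t * (a s * b t) - (∑ s, ∑ t, A s t * G (.inl s) (.inr t) * a s ^ 2 +
        ∑ s, ∑ t, A s t * G (.inl s) (.inr t) * b t ^ 2) / 2 := by
    simp only [← Finset.sum_add_distrib, Finset.sum_div, ← Finset.sum_sub_distrib]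
    exact Finset.sum_congr rfl fun s _ => Finset.sum_congr rfl fun t _ => by ring
  rw [hu, hv]
  linarith

lemma exists_posSemidef_dualMatrix (A : Matrix S T ℝ) :
    ∃ (u : S → ℝ) (v : T → ℝ), ∑ s, u s = quantumBias A ∧ ∑ t, v t = quantumBias A ∧
      (dualMatrix A u v).PosSemidef := by
  obtain ⟨G, hG, hmax, hbias⟩ := exists_isMaxOn_sdpValue A
  exact ⟨_, _, hbias.symm, hbias ▸ Finset.sum_comm, posSemidef_dualMatrix_of_isMaxOn hG hmax⟩

end Duality

section Kronecker

variable {S₁ T₁ S₂ T₂ : Type*}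

def kroneckerIndex : (S₁ × S₂) ⊕ (T₁ × T₂) → (S₁ ⊕ T₁) × (S₂ ⊕ T₂) :=
  Sum.elim (Prod.map .inl .inl) (Prod.map .inr .inr)

lemma dualMatrix_kronecker [DecidableEq S₁] [DecidableEq T₁] [DecidableEq S₂] [DecidableEq T₂]
    (A₁ : Matrix S₁ T₁ ℝ) (A₂ : Matrix S₂ T₂ ℝ) (u₁ : S₁ → ℝ) (v₁ : T₁ → ℝ) (u₂ : S₂ → ℝ)
    (v₂ : T₂ → ℝ) :
    dualMatrix (A₁ ⊗ₖ A₂) (fun s => u₁ s.1 * u₂ s.2) (fun t => v₁ t.1 * v₂ t.2) =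
      (dualMatrix A₁ u₁ v₁ ⊗ₖ dualMatrix (-A₂) u₂ v₂).submatrix kroneckerIndex kroneckerIndex := by
  ext (s | t) (s' | t') <;>
    simp only [dualMatrix, kroneckerIndex, submatrix_apply, Sum.elim_inl, Sum.elim_inr,
      Prod.map_fst, Prod.map_snd, kroneckerMap_apply, fromBlocks_apply₁₁, fromBlocks_apply₁₂,
      fromBlocks_apply₂₁, fromBlocks_apply₂₂, diagonal_apply, Prod.ext_iff, ite_zero_mul_ite_zero,
      Matrix.neg_apply, transpose_apply, neg_mul, neg_neg]

variable [Fintype S₁] [Fintype T₁] [Fintype S₂] [Fintype T₂]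

lemma sdpValue_kronecker (A₁ : Matrix S₁ T₁ ℝ) (A₂ : Matrix S₂ T₂ ℝ)
    (G₁ : Matrix (S₁ ⊕ T₁) (S₁ ⊕ T₁) ℝ) (G₂ : Matrix (S₂ ⊕ T₂) (S₂ ⊕ T₂) ℝ) :
    sdpValue (A₁ ⊗ₖ A₂) ((G₁ ⊗ₖ G₂).submatrix kroneckerIndex kroneckerIndex) =
      sdpValue A₁ G₁ * sdpValue A₂ G₂ := by
  simp only [sdpValue, Finset.sum_mul_sum, Fintype.sum_prod_type]
  refine Finset.sum_congr rfl fun s₁ _ => Finset.sum_congr rfl fun s₂ _ => ?_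
  simp [kroneckerIndex, mul_mul_mul_comm]

lemma quantumBias_mul_le_quantumBias_kronecker (A₁ : Matrix S₁ T₁ ℝ) (A₂ : Matrix S₂ T₂ ℝ) :
    quantumBias A₁ * quantumBias A₂ ≤ quantumBias (A₁ ⊗ₖ A₂) := by
  obtain ⟨G₁, hG₁, -, h₁⟩ := exists_isMaxOn_sdpValue A₁
  obtain ⟨G₂, hG₂, -, h₂⟩ := exists_isMaxOn_sdpValue A₂
  rw [h₁, h₂, ← sdpValue_kronecker]
  exact sdpValue_le_quantumBias _
    (submatrix_mem_elliptope (kronecker_mem_elliptope hG₁ hG₂) kroneckerIndex)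

lemma posSemidef_dualMatrix_kronecker [DecidableEq S₁] [DecidableEq T₁] [DecidableEq S₂]
    [DecidableEq T₂] {A₁ : Matrix S₁ T₁ ℝ} {A₂ : Matrix S₂ T₂ ℝ}
    {u₁ : S₁ → ℝ} {v₁ : T₁ → ℝ} {u₂ : S₂ → ℝ} {v₂ : T₂ → ℝ}
    (h₁ : (dualMatrix A₁ u₁ v₁).PosSemidef) (h₂ : (dualMatrix A₂ u₂ v₂).PosSemidef) :
    (dualMatrix (A₁ ⊗ₖ A₂) (fun s => u₁ s.1 * u₂ s.2) (fun t => v₁ t.1 * v₂ t.2)).PosSemidef := by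
  rw [dualMatrix_kronecker]
  exact (h₁.kronecker (posSemidef_dualMatrix_neg h₂)).submatrix kroneckerIndex

end Kronecker

end XORGame

open XORGame

theorem quantumBias_kronecker_general
    {S₁ T₁ S₂ T₂ : Type*} [Fintype S₁] [Fintype T₁] [Fintype S₂] [Fintype T₂]
    (A₁ : Matrix S₁ T₁ ℝ) (A₂ : Matrix S₂ T₂ ℝ) :
    quantumBias (A₁ ⊗ₖ A₂) = quantumBias A₁ * quantumBias A₂ := by
  classical
  refine le_antisymm ?_ (quantumBias_mul_le_quantumBias_kronecker A₁ A₂)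
  obtain ⟨u₁, v₁, hu₁, hv₁, h₁⟩ := exists_posSemidef_dualMatrix A₁
  obtain ⟨u₂, v₂, hu₂, hv₂, h₂⟩ := exists_posSemidef_dualMatrix A₂
  have hbound := two_mul_quantumBias_le (posSemidef_dualMatrix_kronecker h₁ h₂)
  simp only [Fintype.sum_prod_type, ← Finset.sum_mul_sum, hu₁, hu₂, hv₁, hv₂] at hbound
  linarith

theorem quantumBias_kronecker
    {S₁ T₁ S₂ T₂ : Type*} [Fintype S₁] [Fintype T₁] [Fintype S₂] [Fintype T₂]
    [Nonempty S₁] [Nonempty T₁] [Nonempty S₂] [Nonempty T₂]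
    (A₁ : Matrix S₁ T₁ ℝ) (A₂ : Matrix S₂ T₂ ℝ) :
    quantumBias (A₁ ⊗ₖ A₂) = quantumBias A₁ * quantumBias A₂ :=
  quantumBias_kronecker_general A₁ A₂
end
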